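/- (Theorem 2.3, third identity, q-case.) Let n ∈ ℕ, β₁, β₂ ∈ (0,1) and let m₂ be a natural number with m₂ ≤ n. Then ∑_{x₂=m₂}^{n} ∑_{x₁=0}^{n−x₂} [x₂]_{m₂,q} · u(x₁,x₂) / ∏_{i=1}^{m₂} (1 − β₁·q^{n−m₂−x₁+i−1}) = [n]_{m₂,q} · β₂^{m₂}. (Note that in the range of summation the exponents n−m₂−x₁+i−1 are nonnegative, and the omitted terms with x₂ < m₂ would carry the vanishing factor [x₂]_{m₂,q} = 0.) -/

import Mathlib

open Finset

/-- q-integer `[k]_q = (1 - q^k)/(1 - q)`. -/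
noncomputable def qInt (q : ℝ) (k : ℤ) : ℝ := (1 - q ^ k) / (1 - q)

/-- q-factorial `[n]_q! = ∏_{i=1}^n [i]_q`. -/
noncomputable def qFact (q : ℝ) (n : ℕ) : ℝ := ∏ i ∈ Finset.Icc 1 n, qInt q (i : ℤ)

/-- q-binomial coefficient `C_q(n,k)`. -/
noncomputable def qBinom (q : ℝ) (n k : ℕ) : ℝ := qFact q n / (qFact q k * qFact q (n - k))

/-- q-falling factorial `[u]_{m,q} = ∏_{i=1}^m [u-i+1]_q`. -/
noncomputable def qFall (q : ℝ) (u : ℤ) (m : ℕ) : ℝ := ∏ i ∈ Finset.Icc 1 m, qInt q (u - (i : ℤ) + 1)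

/-- `[k]_{q⁻¹} = q^{1-k} · [k]_q`. -/
noncomputable def qIntInv (q : ℝ) (k : ℤ) : ℝ := q ^ (1 - k) * qInt q k

/-- `[u]_{m,q⁻¹} = ∏_{i=1}^m [u-i+1]_{q⁻¹}`. -/
noncomputable def qFallInv (q : ℝ) (u : ℤ) (m : ℕ) : ℝ := ∏ i ∈ Finset.Icc 1 m, qIntInv q (u - (i : ℤ) + 1)

/-- `b(k) = k(k-1)/2`. -/
def bb (k : ℕ) : ℕ := k * (k - 1) / 2

/-- `⟨1 ⊕ α⟩_m = ∏_{i=1}^m (1 + α q^{i-1})`. -/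
noncomputable def oplus (q α : ℝ) (m : ℕ) : ℝ := ∏ i ∈ Finset.Icc 1 m, (1 + α * q ^ (i - 1))

/-- `⟨1 ⊖ β⟩_m = ∏_{i=1}^m (1 - β q^{i-1})`. -/
noncomputable def ominus (q β : ℝ) (m : ℕ) : ℝ := ∏ i ∈ Finset.Icc 1 m, (1 - β * q ^ (i - 1))

/-- q-trinomial coefficient `T_q(n; x₁, x₂)`. -/
noncomputable def qTri (q : ℝ) (n x1 x2 : ℕ) : ℝ :=
  qFact q n / (qFact q x1 * qFact q x2 * qFact q (n - x1 - x2))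

/-- pmf of the q-trinomial distribution of the second kind. -/
noncomputable def upmf (q b1 b2 : ℝ) (n x1 x2 : ℕ) : ℝ :=
  qTri q n x1 x2 * b1 ^ x1 * b2 ^ x2 * ominus q b1 (n - x1) * ominus q b2 (n - x1 - x2)

/-
The weight `[x₂]_{m₂,q}/∏(1 - β₁ q^{n-m₂-x₁+i-1})` turns `u(x₁, m₂ + y)` into
`[n]_{m₂,q} β₂^{m₂}` times a product of two q-binomial probabilities of the second kind,
`C_q(n - m₂, x₁) β₁^{x₁} ⟨1⊖β₁⟩_{n-m₂-x₁}` and `C_q(n - m₂ - x₁, y) β₂^y ⟨1⊖β₂⟩_{n-m₂-x₁-y}`: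
the falling factorial cancels `[x₂]_q!` against `[y]_q!`, and the denominator is the top part of
`⟨1⊖β₁⟩_{n-x₁}`. Each q-binomial distribution has total mass one, by induction on the number of
trials via the q-Pascal rule, so summing over `y` and then over `x₁` leaves `[n]_{m₂,q} β₂^{m₂}`.
-/

section QCalculus

variable {q : ℝ}

lemma qInt_natCast_eq_geom_sum (hq1 : q ≠ 1) (k : ℕ) :
    qInt q (k : ℤ) = ∑ i ∈ range k, q ^ i := by
  rw [qInt, zpow_natCast, geom_sum_eq hq1, ← neg_div_neg_eq, neg_sub, neg_sub]

lemma qInt_natCast_pos (hq0 : 0 ≤ q) (hq1 : q ≠ 1) {k : ℕ} (hk : k ≠ 0) :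
    0 < qInt q (k : ℤ) := by
  obtain ⟨j, rfl⟩ := Nat.exists_eq_succ_of_ne_zero hk
  rw [qInt_natCast_eq_geom_sum hq1, sum_range_succ']
  positivity

lemma qInt_natCast_add (hq1 : q ≠ 1) (j k : ℕ) :
    qInt q ((j + k : ℕ) : ℤ) = qInt q (j : ℤ) + q ^ j * qInt q (k : ℤ) := by
  have : 1 - q ≠ 0 := sub_ne_zero.mpr hq1.symm
  simp only [qInt, zpow_natCast, pow_add]
  field_simp
  ring

lemma qFact_zero : qFact q 0 = 1 := by simp [qFact]

lemma qFact_succ (n : ℕ) : qFact q (n + 1) = qFact q n * qInt q ((n + 1 : ℕ) : ℤ) :=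
  prod_Icc_succ_top (Nat.le_add_left 1 n) _

lemma qFact_pos (hq0 : 0 ≤ q) (hq1 : q ≠ 1) (n : ℕ) : 0 < qFact q n :=
  prod_pos fun _ hi ↦ qInt_natCast_pos hq0 hq1 (by grind)

lemma qFall_mul_qFact_sub {m u : ℕ} (h : m ≤ u) :
    qFall q (u : ℤ) m * qFact q (u - m) = qFact q u := by
  induction m with
  | zero => simp [qFall]
  | succ m ih =>
    have hu : u - m = u - (m + 1) + 1 := by omega
    rw [qFall, prod_Icc_succ_top (by omega), ← qFall, ← ih (by omega), hu, qFact_succ, ← hu,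
      show (u : ℤ) - (m + 1 : ℕ) + 1 = (u - m : ℕ) by omega]
    ring

lemma qBinom_zero_right (hq0 : 0 ≤ q) (hq1 : q ≠ 1) (n : ℕ) : qBinom q n 0 = 1 := by
  rw [qBinom, qFact_zero, Nat.sub_zero, one_mul, div_self (qFact_pos hq0 hq1 n).ne']

lemma qBinom_self (hq0 : 0 ≤ q) (hq1 : q ≠ 1) (n : ℕ) : qBinom q n n = 1 := by
  rw [qBinom, Nat.sub_self, qFact_zero, mul_one, div_self (qFact_pos hq0 hq1 n).ne']

/-- The q-Pascal rule; it reduces to `[a + c + 2]_q = [c + 1]_q + q^{c+1} [a + 1]_q`. -/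
lemma qBinom_succ_succ (hq0 : 0 ≤ q) (hq1 : q ≠ 1) {M a : ℕ} (h : a < M) :
    qBinom q (M + 1) (a + 1) = qBinom q M (a + 1) + q ^ (M - a) * qBinom q M a := by
  obtain ⟨c, rfl⟩ : ∃ c, M = a + c + 1 := ⟨M - a - 1, by omega⟩
  have hadd := qInt_natCast_add hq1 (c + 1) (a + 1)
  have ha := (qInt_natCast_pos hq0 hq1 a.succ_ne_zero).ne'
  have hc := (qInt_natCast_pos hq0 hq1 c.succ_ne_zero).ne'
  have hFa := (qFact_pos hq0 hq1 a).ne'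
  have hFc := (qFact_pos hq0 hq1 c).ne'
  rw [show c + 1 + (a + 1) = a + c + 1 + 1 by omega] at hadd
  rw [qBinom, qBinom, qBinom, show a + c + 1 + 1 - (a + 1) = c + 1 by omega,
    show a + c + 1 - (a + 1) = c by omega, show a + c + 1 - a = c + 1 by omega,
    qFact_succ (a + c + 1), qFact_succ a, qFact_succ c, hadd]
  field_simp

end QCalculus

section Ominus

variable {q : ℝ}

lemma ominus_succ (β : ℝ) (m : ℕ) : ominus q β (m + 1) = ominus q β m * (1 - β * q ^ m) := by
  rw [ominus, prod_Icc_succ_top (Nat.le_add_left 1 m), ← ominus, Nat.add_sub_cancel]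

lemma ominus_add (β : ℝ) (a m : ℕ) :
    ominus q β (a + m) = ominus q β a * ∏ i ∈ Icc 1 m, (1 - β * q ^ (a + i - 1)) := by
  induction m with
  | zero => simp
  | succ m ih =>
    rw [← add_assoc, ominus_succ, ih, prod_Icc_succ_top (Nat.le_add_left 1 m),
      show a + (m + 1) - 1 = a + m by omega]
    ring

lemma one_sub_mul_pow_pos {β : ℝ} (hq0 : 0 ≤ q) (hq1 : q ≤ 1) (hβ : β < 1) (j : ℕ) :
    0 < 1 - β * q ^ j := by
  have h0 : 0 ≤ q ^ j := pow_nonneg hq0 j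
  have h1 : q ^ j ≤ 1 := pow_le_one₀ hq0 hq1
  rcases le_or_gt 0 β with hβ0 | hβ0 <;> nlinarith

end Ominus

/-- The q-binomial distribution of the second kind with `M` trials and parameter `β`. -/
noncomputable def qBinomPmf (q β : ℝ) (M k : ℕ) : ℝ :=
  qBinom q M k * β ^ k * ominus q β (M - k)

lemma sum_range_succ_succ_eq_sum_add {α : Type*} [AddCommMonoid α] {p A B : ℕ → α} {n : ℕ}
    (h0 : p 0 = A 0) (hsucc : ∀ k < n, p (k + 1) = A (k + 1) + B k) (hlast : p (n + 1) = B n) :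
    ∑ k ∈ range (n + 2), p k = ∑ k ∈ range (n + 1), (A k + B k) := by
  rw [sum_range_succ', sum_range_succ, sum_congr rfl fun k hk ↦ hsucc k (mem_range.mp hk),
    sum_add_distrib, sum_add_distrib, sum_range_succ' A, sum_range_succ B, h0, hlast]
  abel

lemma sum_qBinomPmf {q : ℝ} (hq0 : 0 ≤ q) (hq1 : q ≠ 1) (β : ℝ) (M : ℕ) :
    ∑ k ∈ range (M + 1), qBinomPmf q β M k = 1 := by
  induction M with
  | zero => simp [qBinomPmf, qBinom_zero_right hq0 hq1, ominus]
  | succ M ih =>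
    rw [← ih, sum_range_succ_succ_eq_sum_add
      (A := fun k ↦ qBinomPmf q β M k * (1 - β * q ^ (M - k)))
      (B := fun k ↦ qBinomPmf q β M k * (β * q ^ (M - k)))]
    · exact sum_congr rfl fun k _ ↦ by ring
    · simp only [qBinomPmf, qBinom_zero_right hq0 hq1, Nat.sub_zero, ominus_succ]
      ring
    · intro k hk
      simp only [qBinomPmf, qBinom_succ_succ hq0 hq1 hk, Nat.add_sub_add_right,
        show M - k = M - (k + 1) + 1 by omega, ominus_succ]
      ring
    · simp only [qBinomPmf, qBinom_self hq0 hq1, Nat.sub_self, ominus]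
      ring

lemma qFall_mul_qTri {q : ℝ} (hq0 : 0 ≤ q) (hq1 : q ≠ 1) {n m x y : ℕ} (h : m + x + y ≤ n) :
    qFall q ((m + y : ℕ) : ℤ) m * qTri q n x (m + y)
      = qFall q (n : ℤ) m * (qBinom q (n - m) x * qBinom q (n - m - x) y) := by
  have hF (k : ℕ) : qFact q k ≠ 0 := (qFact_pos hq0 hq1 k).ne'
  have hy := qFall_mul_qFact_sub (q := q) (Nat.le_add_right m y)
  have hn := qFall_mul_qFact_sub (q := q) (le_trans (by omega) h : m ≤ n)
  rw [Nat.add_sub_cancel_left] at hy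
  rw [eq_div_of_mul_eq (hF _) hy, eq_div_of_mul_eq (hF _) hn, qTri, qBinom, qBinom,
    show n - x - (m + y) = n - m - x - y by omega]
  field_simp [hF]

lemma qFall_mul_upmf_div {q β₁ β₂ : ℝ} (hq0 : 0 < q) (hq1 : q < 1) (hβ₁ : β₁ < 1)
    {n m x y : ℕ} (h : m + x + y ≤ n) :
    qFall q ((m + y : ℕ) : ℤ) m * upmf q β₁ β₂ n x (m + y) /
        ∏ i ∈ Icc 1 m, (1 - β₁ * q ^ (n - m - x + i - 1))
      = qFall q (n : ℤ) m * β₂ ^ m * (qBinomPmf q β₁ (n - m) x * qBinomPmf q β₂ (n - m - x) y) := by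
  have hP : ∏ i ∈ Icc 1 m, (1 - β₁ * q ^ (n - m - x + i - 1)) ≠ 0 :=
    (prod_pos fun _ _ ↦ one_sub_mul_pow_pos hq0.le hq1.le hβ₁ _).ne'
  have htri := qFall_mul_qTri hq0.le hq1.ne h
  rw [upmf, qBinomPmf, qBinomPmf, show n - x = n - m - x + m by omega, ominus_add,
    show n - m - x + m - (m + y) = n - m - x - y by omega]
  field_simp
  linear_combination (β₁ ^ x * β₂ ^ (m + y) * ominus q β₁ (n - m - x) *
    ominus q β₂ (n - m - x - y)) * htri

theorem stmt12_general (q : ℝ) (hq0 : 0 < q) (hq1 : q < 1) (n : ℕ) (β1 β2 : ℝ)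
    (hβ1' : β1 < 1)
    (m2 : ℕ) (hm2 : m2 ≤ n) :
    ∑ x2 ∈ Finset.Icc m2 n, ∑ x1 ∈ Finset.range (n - x2 + 1),
      qFall q (x2 : ℤ) m2 * upmf q β1 β2 n x1 x2 /
        ∏ i ∈ Finset.Icc 1 m2, (1 - β1 * q ^ (n - m2 - x1 + i - 1))
      = qFall q (n : ℤ) m2 * β2 ^ m2 := by
  calc _ = ∑ x1 ∈ range (n - m2 + 1), ∑ y ∈ range (n - m2 - x1 + 1),
          qFall q (n : ℤ) m2 * β2 ^ m2 *
            (qBinomPmf q β1 (n - m2) x1 * qBinomPmf q β2 (n - m2 - x1) y) := by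
        rw [sum_comm' (t' := range (n - m2 + 1)) (s' := fun x1 ↦ Icc m2 (n - x1))
          (fun x2 x1 ↦ by simp only [mem_Icc, mem_range]; omega)]
        refine sum_congr rfl fun x1 hx1 ↦ ?_
        rw [mem_range] at hx1
        rw [← Ico_add_one_right_eq_Icc, sum_Ico_eq_sum_range,
          show n - x1 + 1 - m2 = n - m2 - x1 + 1 by omega]
        exact sum_congr rfl fun y hy ↦ qFall_mul_upmf_div hq0 hq1 hβ1'
          (by rw [mem_range] at hy; omega)
    _ = qFall q (n : ℤ) m2 * β2 ^ m2 := by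
        simp only [← mul_sum, sum_qBinomPmf hq0.le hq1.ne, mul_one]

theorem stmt12 (q : ℝ) (hq0 : 0 < q) (hq1 : q < 1) (n : ℕ) (β1 β2 : ℝ)
    (hβ1 : 0 < β1) (hβ1' : β1 < 1) (hβ2 : 0 < β2) (hβ2' : β2 < 1)
    (m2 : ℕ) (hm2 : m2 ≤ n) :
    ∑ x2 ∈ Finset.Icc m2 n, ∑ x1 ∈ Finset.range (n - x2 + 1),
      qFall q (x2 : ℤ) m2 * upmf q β1 β2 n x1 x2 /
        ∏ i ∈ Finset.Icc 1 m2, (1 - β1 * q ^ (n - m2 - x1 + i - 1))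
      = qFall q (n : ℤ) m2 * β2 ^ m2 :=
  stmt12_general q hq0 hq1 n β1 β2 hβ1' m2 hm2
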